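/- The Kalman updating step is the Bellman update for a linear Gaussian observation (Corollary 1 / Appendix G, information form): Let m, l ≥ 1, let H be a symmetric positive definite l×l real matrix, let I be a symmetric positive definite m×m real matrix, let Z be an l×m real matrix, let d, y ∈ ℝˡ and p ∈ ℝᵐ, and define f : ℝᵐ → ℝ by f(x) = −(1/2)(y − d − Zx)ᵀH⁻¹(y − d − Zx). Then the function x ↦ f(x) − (1/2)(x − p)ᵀI(x − p) attains its maximum over ℝᵐ at the unique point x* = p + (I + ZᵀH⁻¹Z)⁻¹ ZᵀH⁻¹ (y − d − Zp). -/

import Mathlib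

open Matrix

lemma dot_mulVec_eq' {a b : ℕ} (N : Matrix (Fin a) (Fin b) ℝ) (v : Fin a → ℝ)
    (w : Fin b → ℝ) : v ⬝ᵥ N.mulVec w = (Nᵀ.mulVec v) ⬝ᵥ w := by
  rw [dotProduct_mulVec, ← mulVec_transpose]

lemma quad_expand {m : ℕ} (A : Matrix (Fin m) (Fin m) ℝ) (hA : Aᵀ = A)
    (b u s : Fin m → ℝ) (hs : A.mulVec s = b) :
    (u - s) ⬝ᵥ A.mulVec (u - s)
      = u ⬝ᵥ A.mulVec u - 2 * (u ⬝ᵥ b) + s ⬝ᵥ b := by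
  have hsu : s ⬝ᵥ A.mulVec u = u ⬝ᵥ b := by
    rw [dot_mulVec_eq', hA, hs, dotProduct_comm]
  have hus : u ⬝ᵥ A.mulVec s = u ⬝ᵥ b := by rw [hs]
  have hss : s ⬝ᵥ A.mulVec s = s ⬝ᵥ b := by rw [hs]
  rw [mulVec_sub, sub_dotProduct, dotProduct_sub, dotProduct_sub, hsu, hus, hss]
  ring

/-- **The Kalman updating step is the Bellman update for a linear Gaussian
observation** (Corollary 1 / Appendix G, information form): with Gaussian
observation log-likelihood `f x = -(1/2)(y - d - Zx)ᵀ H⁻¹ (y - d - Zx)`, the map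
`x ↦ f x - (1/2)(x - p)ᵀ I (x - p)` attains its maximum at the unique point
`x* = p + (I + Zᵀ H⁻¹ Z)⁻¹ Zᵀ H⁻¹ (y - d - Z p)`. -/
theorem kalman_update_is_bellman_update
    (m l : ℕ) (hm : 1 ≤ m) (hl : 1 ≤ l)
    (H : Matrix (Fin l) (Fin l) ℝ) (hH : H.PosDef)
    (I : Matrix (Fin m) (Fin m) ℝ) (hI : I.PosDef)
    (Z : Matrix (Fin l) (Fin m) ℝ)
    (d y : Fin l → ℝ) (p : Fin m → ℝ)
    (f : (Fin m → ℝ) → ℝ)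
    (hf : ∀ x : Fin m → ℝ, f x =
      -(1/2) * ((y - d - Z.mulVec x) ⬝ᵥ H⁻¹.mulVec (y - d - Z.mulVec x)))
    (V : (Fin m → ℝ) → ℝ)
    (hV : ∀ x : Fin m → ℝ, V x = f x - (1/2) * ((x - p) ⬝ᵥ I.mulVec (x - p)))
    (xstar : Fin m → ℝ)
    (hx : xstar = p + (I + Zᵀ * H⁻¹ * Z)⁻¹.mulVec
      ((Zᵀ * H⁻¹).mulVec (y - d - Z.mulVec p))) :
    (∀ x : Fin m → ℝ, V x ≤ V xstar) ∧
    (∀ x : Fin m → ℝ, (∀ x' : Fin m → ℝ, V x' ≤ V x) → x = xstar) := by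
  obtain ⟨r, hr⟩ : ∃ r, y - d - Z.mulVec p = r := ⟨_, rfl⟩
  obtain ⟨A, hAdef⟩ : ∃ A, I + Zᵀ * H⁻¹ * Z = A := ⟨_, rfl⟩
  obtain ⟨b, hb⟩ : ∃ b, (Zᵀ * H⁻¹).mulVec r = b := ⟨_, rfl⟩
  obtain ⟨s, hsdef⟩ : ∃ s, A⁻¹.mulVec b = s := ⟨_, rfl⟩
  rw [hr, hb, hAdef, hsdef] at hx
  have hxs : xstar = p + s := hx
  have hHinv : H⁻¹.PosDef := hH.inv
  have hHsymm : H⁻¹ᵀ = H⁻¹ := by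
    have := hHinv.isHermitian
    simpa [Matrix.IsHermitian, Matrix.conjTranspose_eq_transpose_of_trivial] using this
  have hIsymm : Iᵀ = I := by
    have := hI.isHermitian
    simpa [Matrix.IsHermitian, Matrix.conjTranspose_eq_transpose_of_trivial] using this
  have hconj : Zᴴ = Zᵀ := by
    ext i j; simp [conjTranspose_apply]
  have hApos : A.PosDef := by
    rw [← hAdef]
    refine hI.add_posSemidef ?_
    rw [← hconj]
    exact hHinv.posSemidef.conjTranspose_mul_mul_same Z
  have hAsymm : Aᵀ = A := by
    rw [← hAdef, transpose_add, hIsymm, transpose_mul, transpose_mul,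
      transpose_transpose, hHsymm, Matrix.mul_assoc]
  have hAinv : A * A⁻¹ = 1 :=
    mul_nonsing_inv A ((isUnit_iff_isUnit_det A).mp hApos.isUnit)
  have hAs : A.mulVec s = b := by
    rw [← hsdef, mulVec_mulVec, hAinv, one_mulVec]
  have hVexp : ∀ x : Fin m → ℝ, V x =
      -(1/2) * (r ⬝ᵥ H⁻¹.mulVec r) + (x - p) ⬝ᵥ b
        - (1/2) * ((x - p) ⬝ᵥ A.mulVec (x - p)) := by
    intro x
    obtain ⟨u, hu⟩ : ∃ u, x - p = u := ⟨_, rfl⟩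
    have hres : y - d - Z.mulVec x = r - Z.mulVec u := by
      rw [← hr, ← hu, mulVec_sub]; abel
    have h1 : r ⬝ᵥ H⁻¹.mulVec (Z.mulVec u) = u ⬝ᵥ b := by
      rw [mulVec_mulVec, dot_mulVec_eq', transpose_mul, hHsymm, hb,
        dotProduct_comm]
    have h2 : (Z.mulVec u) ⬝ᵥ H⁻¹.mulVec r = u ⬝ᵥ b := by
      rw [dot_mulVec_eq', hHsymm, mulVec_mulVec, dotProduct_comm,
        ← mulVec_mulVec]
      exact h1
    have h3 : (Z.mulVec u) ⬝ᵥ H⁻¹.mulVec (Z.mulVec u)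
        = u ⬝ᵥ (Zᵀ * H⁻¹ * Z).mulVec u := by
      rw [mulVec_mulVec, dotProduct_comm, dot_mulVec_eq', mulVec_mulVec,
        ← Matrix.mul_assoc, dotProduct_comm]
    have h4 : u ⬝ᵥ A.mulVec u
        = u ⬝ᵥ I.mulVec u + u ⬝ᵥ (Zᵀ * H⁻¹ * Z).mulVec u := by
      rw [← hAdef, add_mulVec, dotProduct_add]
    rw [hV, hf, hres, hu, mulVec_sub, dotProduct_sub, sub_dotProduct,
      sub_dotProduct, h1, h2, h3, h4]
    ring
  have hdiff : ∀ x : Fin m → ℝ,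
      V x = V xstar - (1/2) * ((x - xstar) ⬝ᵥ A.mulVec (x - xstar)) := by
    intro x
    have hq := quad_expand A hAsymm b (x - p) s hAs
    have hxx : x - xstar = (x - p) - s := by rw [hxs]; abel
    have hsp : xstar - p = s := by rw [hxs]; abel
    rw [hVexp x, hVexp xstar, hxx, hsp, hq, hAs]
    ring
  constructor
  · intro x
    rw [hdiff x]
    have h0 : 0 ≤ (x - xstar) ⬝ᵥ A.mulVec (x - xstar) := by
      have := hApos.posSemidef.dotProduct_mulVec_nonneg (x - xstar)
      simpa using this
    linarith
  · intro x hmax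
    by_contra hne
    have hne' : x - xstar ≠ 0 := sub_ne_zero.mpr hne
    have hpos : 0 < (x - xstar) ⬝ᵥ A.mulVec (x - xstar) := by
      have := hApos.dotProduct_mulVec_pos hne'
      simpa using this
    have := hmax xstar
    rw [hdiff x] at this
    linarith
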